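/- arXiv:2206.02752 — 3 statements merged into one kernel-verified Lean document; each statement's English description precedes it below -/
import Mathlib

section
/- Fix r with 0<r<1 and let λ∈ℂ. Regard f(z)=z−λ as an element of ℋ²(A_r). If r<|λ|<1, then f is not cyclic in ℋ²(A_r) (hence not free outer). If |λ|≤r, then f is cyclic in ℋ²(A_r) but not free outer. -/
noncomputable section

namespace Annulus

open Complex Metric
open scoped Classical

/-- The annulus `A_r = {z : r < |z| < 1}`. -/
def ARset (r : ℝ) : Set ℂ := {z : ℂ | r < ‖z‖ ∧ ‖z‖ < 1}

/-- The weight `r^(2n)` for `n < 0`, `1` for `n ≥ 0`, appearing in the norm of `ℋ²(A_r)`. -/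
def wgt (r : ℝ) (n : ℤ) : ℝ := if n < 0 then r ^ (2 * n) else 1

/-- The coefficient square norm `∑_{n<0} r^(2n) |c n|² + ∑_{n≥0} |c n|²`. -/
def coeffNormSq (r : ℝ) (c : ℤ → ℂ) : ℝ := ∑' n : ℤ, wgt r n * ‖c n‖ ^ 2

/-- `f` is represented on `A_r` by the Laurent series with coefficients `c`,
and this series has finite `ℋ²(A_r)` norm. -/
def HasCoeff (r : ℝ) (f : ℂ → ℂ) (c : ℤ → ℂ) : Prop :=
  (Summable fun n : ℤ => wgt r n * ‖c n‖ ^ 2) ∧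
    ∀ z ∈ ARset r, f z = ∑' n : ℤ, c n * z ^ n

/-- Membership in `ℋ²(A_r)` (for a function regarded via its restriction to `A_r`). -/
def MemH2A (r : ℝ) (f : ℂ → ℂ) : Prop := ∃ c, HasCoeff r f c

/-- The Laurent coefficients of an element of `ℋ²(A_r)` (uniquely determined). -/
def coeffA (r : ℝ) (f : ℂ → ℂ) : ℤ → ℂ := if h : MemH2A r f then h.choose else 0

/-- The norm of `ℋ²(A_r)`. -/
def normA (r : ℝ) (f : ℂ → ℂ) : ℝ := Real.sqrt (coeffNormSq r (coeffA r f))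

/-- The inner product of `ℋ²(A_r)` (linear in the first argument). -/
def innerA (r : ℝ) (f g : ℂ → ℂ) : ℂ :=
  ∑' n : ℤ, (wgt r n : ℂ) * coeffA r f n * (starRingEnd ℂ) (coeffA r g n)

/-- `φ` is a multiplier of `ℋ²(A_r)`. -/
def IsMult (r : ℝ) (φ : ℂ → ℂ) : Prop := ∀ f, MemH2A r f → MemH2A r (φ * f)

/-- The multiplier norm (operator norm of `M_φ` on `ℋ²(A_r)`). -/
def multNorm (r : ℝ) (φ : ℂ → ℂ) : ℝ :=
  sInf {C : ℝ | 0 ≤ C ∧ ∀ f, MemH2A r f → normA r (φ * f) ≤ C * normA r f}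

/-- `φ` is a subinner multiplier of `ℋ²(A_r)`: multiplier norm one and norm attained
at some nonzero `h ∈ ℋ²(A_r)`. -/
def Subinner (r : ℝ) (φ : ℂ → ℂ) : Prop :=
  IsMult r φ ∧ multNorm r φ = 1 ∧
    ∃ h, MemH2A r h ∧ (∃ z ∈ ARset r, h z ≠ 0) ∧ normA r (φ * h) = normA r h

/-- `g ∈ ℰ_f`: `⟨φ g, g⟩ = ⟨φ f, f⟩` for every multiplier `φ` of `ℋ²(A_r)`. -/
def SameP (r : ℝ) (f g : ℂ → ℂ) : Prop :=
  ∀ φ, IsMult r φ → innerA r (φ * g) g = innerA r (φ * f) f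

/-- `f` is free outer in `ℋ²(A_r)`:  `|f(z)| = sup {|g(z)| : g ∈ ℰ_f}` for all `z ∈ A_r`. -/
def FreeOuter (r : ℝ) (f : ℂ → ℂ) : Prop :=
  MemH2A r f ∧ ∀ z ∈ ARset r,
    ‖f z‖ = sSup {t : ℝ | ∃ g, MemH2A r g ∧ SameP r f g ∧ t = ‖g z‖}

/-- `f` is cyclic in `ℋ²(A_r)`: multiplier multiples of `f` are dense. -/
def Cyclic (r : ℝ) (f : ℂ → ℂ) : Prop :=
  MemH2A r f ∧ ∀ g, MemH2A r g → ∀ ε > 0, ∃ φ, IsMult r φ ∧ normA r (φ * f - g) < ε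

/-! Hardy space of the unit disk. -/

/-- `f` is represented on `𝔻` by the Taylor series with coefficients `a`, square-summable. -/
def HasCoeffD (f : ℂ → ℂ) (a : ℕ → ℂ) : Prop :=
  (Summable fun n : ℕ => ‖a n‖ ^ 2) ∧
    ∀ z : ℂ, ‖z‖ < 1 → f z = ∑' n : ℕ, a n * z ^ n

/-- Membership in the Hardy space `H²(𝔻)`. -/
def MemH2D (f : ℂ → ℂ) : Prop := ∃ a, HasCoeffD f a

/-- The Taylor coefficients of an element of `H²(𝔻)`. -/
def coeffD (f : ℂ → ℂ) : ℕ → ℂ := if h : MemH2D f then h.choose else 0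

/-- The `H²(𝔻)` norm. -/
def normD (f : ℂ → ℂ) : ℝ := Real.sqrt (∑' n : ℕ, ‖coeffD f n‖ ^ 2)

/-- The `H²(𝔻)` inner product (linear in the first argument). -/
def innerD (f g : ℂ → ℂ) : ℂ := ∑' n : ℕ, coeffD f n * (starRingEnd ℂ) (coeffD g n)

/-- `φ` is bounded and holomorphic on the unit disk. -/
def BddHol (φ : ℂ → ℂ) : Prop :=
  DifferentiableOn ℂ φ (ball (0 : ℂ) 1) ∧
    ∃ M : ℝ, ∀ z ∈ ball (0 : ℂ) 1, ‖φ z‖ ≤ M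

/-- The supremum norm of `H^∞(𝔻)`. -/
def hinfNorm (φ : ℂ → ℂ) : ℝ := sSup {t : ℝ | ∃ z ∈ ball (0 : ℂ) 1, t = ‖φ z‖}

/-- `φ` is `H²(𝔻)`-inner: a bounded holomorphic function on `𝔻` with
`‖φ f‖ = ‖f‖` for every `f ∈ H²(𝔻)`. -/
def InnerD (φ : ℂ → ℂ) : Prop :=
  BddHol φ ∧ ∀ f, MemH2D f → MemH2D (φ * f) ∧ normD (φ * f) = normD f

/-- `f` is `H²(𝔻)`-outer: polynomial multiples of `f` are dense in `H²(𝔻)`. -/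
def OuterD (f : ℂ → ℂ) : Prop :=
  MemH2D f ∧ ∀ g, MemH2D g → ∀ ε > 0, ∃ p : Polynomial ℂ,
    normD (fun z => p.eval z * f z - g z) < ε

/-! Hardy space of the disk `𝔻₀ = {|z| > r}` at infinity. -/

/-- Membership in `H²(𝔻₀)`: `f(z) = h(r/z)` with `h ∈ H²(𝔻)`. -/
def MemH2D0 (r : ℝ) (f : ℂ → ℂ) : Prop :=
  ∃ h, MemH2D h ∧ ∀ z : ℂ, r < ‖z‖ → f z = h (r / z)

/-- The `H²(𝔻₀)` norm: `‖f‖ = ‖h‖_{H²(𝔻)}` where `f(z) = h(r/z)`. -/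
def normD0 (r : ℝ) (f : ℂ → ℂ) : ℝ := if h : MemH2D0 r f then normD h.choose else 0

/-- `φ` is bounded and holomorphic on `𝔻₀` (including at `∞`):
`φ(z) = ψ(r/z)` for a bounded holomorphic `ψ` on `𝔻`. -/
def BddHol0 (r : ℝ) (φ : ℂ → ℂ) : Prop :=
  ∃ ψ, BddHol ψ ∧ ∀ z : ℂ, r < ‖z‖ → φ z = ψ (r / z)

/-- The supremum norm of `H^∞(𝔻₀)`. -/
def hinfNorm0 (r : ℝ) (φ : ℂ → ℂ) : ℝ :=
  sSup {t : ℝ | ∃ z : ℂ, r < ‖z‖ ∧ t = ‖φ z‖}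

/-- `φ` is `H²(𝔻₀)`-inner: `φ(z) = ψ(r/z)` for an `H²(𝔻)`-inner `ψ`. -/
def InnerD0 (r : ℝ) (φ : ℂ → ℂ) : Prop :=
  ∃ ψ, InnerD ψ ∧ ∀ z : ℂ, r < ‖z‖ → φ z = ψ (r / z)

/-- `f` is `H²(𝔻₀)`-outer: `f(z) = h(r/z)` for an `H²(𝔻)`-outer `h`. -/
def OuterD0 (r : ℝ) (f : ℂ → ℂ) : Prop :=
  ∃ h, OuterD h ∧ ∀ z : ℂ, r < ‖z‖ → f z = h (r / z)

/-! Multipliers between spaces. -/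

/-- `φ ∈ Mult(H²(𝔻), ℋ²(A_r))`. -/
def IsMultDtoA (r : ℝ) (φ : ℂ → ℂ) : Prop := ∀ f, MemH2D f → MemH2A r (φ * f)

/-- The norm of `Mult(H²(𝔻), ℋ²(A_r))`. -/
def multNormDtoA (r : ℝ) (φ : ℂ → ℂ) : ℝ :=
  sInf {C : ℝ | 0 ≤ C ∧ ∀ f, MemH2D f → normA r (φ * f) ≤ C * normD f}

/-- `φ ∈ Mult(H²(𝔻₀), ℋ²(A_r))`. -/
def IsMultD0toA (r : ℝ) (φ : ℂ → ℂ) : Prop := ∀ f, MemH2D0 r f → MemH2A r (φ * f)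

/-- The norm of `Mult(H²(𝔻₀), ℋ²(A_r))`. -/
def multNormD0toA (r : ℝ) (φ : ℂ → ℂ) : ℝ :=
  sInf {C : ℝ | 0 ≤ C ∧ ∀ f, MemH2D0 r f → normA r (φ * f) ≤ C * normD0 r f}

end Annulus

/-!
Laurent coefficients on `A_r` are unique, being recovered by integrating over a circle inside the
annulus; so norms and inner products can be computed from any expansion, and evaluation at a
point of `A_r` is bounded.

If `r < |λ| < 1`, then `λ ∈ A_r` and every `φ f` vanishes at `λ`, so boundedness of evaluation at
`λ` keeps `1` away from the multiplier multiples of `f`. If `|λ| ≤ r`, the Cesàro means `q_N` of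
`1 / (z - λ) = ∑ λⁱ z⁻ⁱ⁻¹` are Laurent polynomials with
`q_N f - 1 = -(N + 1)⁻¹ ∑_{k ≤ N} (λ / z)^(k+1)`, of squared norm at most `1 / (N + 1)`; since
Laurent polynomials are dense and act as bounded multipliers, `f` is cyclic.

For `|λ| < 1`, `f` is not free outer: `z⁰` and `z¹` have the same weight, so `g = 1 - λ̄ z`
satisfies `⟨φ g, g⟩ = ⟨φ f, f⟩` for every multiplier `φ`, while
`|g(z)|² - |f(z)|² = (1 - |λ|²)(1 - |z|²) > 0`.
-/

namespace Annulus

open Complex ComplexConjugate Metric Finset Real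

variable {r : ℝ} {f g φ ψ : ℂ → ℂ} {c d : ℤ → ℂ} {z l : ℂ} {C D : ℝ} {ι : Type*}

lemma wgt_pos (hr0 : 0 < r) (n : ℤ) : 0 < wgt r n := by
  unfold wgt; split <;> positivity

def sqrtWgt (r : ℝ) (n : ℤ) : ℝ := if n < 0 then r ^ n else 1

lemma sqrtWgt_pos (hr0 : 0 < r) (n : ℤ) : 0 < sqrtWgt r n := by
  unfold sqrtWgt; split <;> positivity

lemma sqrtWgt_sq (n : ℤ) : sqrtWgt r n ^ 2 = wgt r n := by
  unfold sqrtWgt wgt; split_ifs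
  · rw [← zpow_natCast, ← zpow_mul, mul_comm]; rfl
  · simp

lemma wgt_add_le (hr0 : 0 < r) (hr1 : r < 1) (m k : ℤ) :
    wgt r (m + k) ≤ r ^ (-(2 * |k|)) * wgt r m := by
  have hw : ∀ n, wgt r n = r ^ (if n < 0 then 2 * n else 0) := fun n => by
    unfold wgt; split_ifs <;> simp
  rw [hw, hw, ← zpow_add₀ hr0.ne']
  apply zpow_le_zpow_right_of_le_one₀ hr0 hr1.le
  have := neg_abs_le k
  have := le_abs_self k
  split_ifs <;> omega

lemma norm_pos_of_mem_ARset (hr0 : 0 < r) (hz : z ∈ ARset r) : 0 < ‖z‖ := hr0.trans hz.1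

lemma norm_le_sqrt_coeffNormSq_div (hr0 : 0 < r)
    (hc : Summable fun n => wgt r n * ‖c n‖ ^ 2) (n : ℤ) :
    ‖c n‖ ≤ √(coeffNormSq r c) / sqrtWgt r n := by
  rw [le_div_iff₀ (sqrtWgt_pos hr0 n)]
  apply Real.le_sqrt_of_sq_le
  rw [mul_pow, sqrtWgt_sq, mul_comm]
  exact hc.le_tsum n fun j _ => mul_nonneg (wgt_pos hr0 j).le (sq_nonneg _)

lemma summable_norm_zpow_div_sqrtWgt (hr0 : 0 < r) (hz : z ∈ ARset r) :
    Summable fun n : ℤ => ‖z‖ ^ n / sqrtWgt r n := by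
  have hz0 := norm_pos_of_mem_ARset hr0 hz
  apply Summable.of_nat_of_neg
  · refine (summable_geometric_of_lt_one (norm_nonneg z) hz.2).congr fun n => ?_
    simp [sqrtWgt, (Int.natCast_nonneg n).not_gt]
  · refine (summable_geometric_of_lt_one (by positivity)
      ((div_lt_one hz0).2 hz.1)).congr fun n => ?_
    rcases n.eq_zero_or_pos with rfl | hn
    · simp [sqrtWgt]
    · rw [sqrtWgt, if_pos (by omega), zpow_neg, zpow_neg, zpow_natCast, zpow_natCast,
        div_pow, inv_div_inv]

def evalBound (r : ℝ) (z : ℂ) : ℝ := ∑' n : ℤ, ‖z‖ ^ n / sqrtWgt r n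

lemma norm_mul_norm_zpow_le (hr0 : 0 < r) (hc : Summable fun n => wgt r n * ‖c n‖ ^ 2)
    (z : ℂ) (n : ℤ) : ‖c n‖ * ‖z‖ ^ n ≤ √(coeffNormSq r c) * (‖z‖ ^ n / sqrtWgt r n) :=
  calc ‖c n‖ * ‖z‖ ^ n ≤ √(coeffNormSq r c) / sqrtWgt r n * ‖z‖ ^ n :=
        mul_le_mul_of_nonneg_right (norm_le_sqrt_coeffNormSq_div hr0 hc n) (by positivity)
    _ = _ := by ring

lemma summable_norm_mul_norm_zpow (hr0 : 0 < r) (hc : Summable fun n => wgt r n * ‖c n‖ ^ 2)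
    (hz : z ∈ ARset r) : Summable fun n : ℤ => ‖c n‖ * ‖z‖ ^ n :=
  ((summable_norm_zpow_div_sqrtWgt hr0 hz).mul_left _).of_nonneg_of_le (fun _ => by positivity)
    (norm_mul_norm_zpow_le hr0 hc z)

lemma summable_norm_mul_zpow (hr0 : 0 < r) (hc : Summable fun n => wgt r n * ‖c n‖ ^ 2)
    (hz : z ∈ ARset r) : Summable fun n : ℤ => ‖c n * z ^ n‖ := by
  simpa [norm_zpow] using summable_norm_mul_norm_zpow hr0 hc hz

lemma HasCoeff.norm_apply_le (hr0 : 0 < r) (hf : HasCoeff r f c) (hz : z ∈ ARset r) :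
    ‖f z‖ ≤ √(coeffNormSq r c) * evalBound r z := by
  rw [hf.2 z hz, evalBound, ← tsum_mul_left]
  refine (norm_tsum_le_tsum_norm (summable_norm_mul_zpow hr0 hf.1 hz)).trans
    (Summable.tsum_le_tsum (fun n => ?_) (summable_norm_mul_zpow hr0 hf.1 hz)
      ((summable_norm_zpow_div_sqrtWgt hr0 hz).mul_left _))
  rw [norm_mul, norm_zpow]
  exact norm_mul_norm_zpow_le hr0 hf.1 z n

lemma circleIntegral_zpow_sub_one {ρ : ℝ} (hρ : 0 < ρ) (k : ℤ) :
    (∮ z in C(0, ρ), z ^ (k - 1)) = if k = 0 then 2 * π * I else 0 := by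
  split_ifs with hk
  · simpa [hk] using circleIntegral.integral_sub_center_inv 0 hρ.ne'
  · simpa using circleIntegral.integral_sub_zpow_of_ne (n := k - 1) (by omega) 0 0 ρ

lemma circleIntegral_tsum_mul_zpow {ρ : ℝ} (hρ : 0 < ρ) (hs : Summable fun n => ‖c n‖ * ρ ^ n)
    (m : ℤ) : (∮ z in C(0, ρ), (∑' n, c n * z ^ n) * z ^ (-m - 1)) = 2 * π * I * c m := by
  have hterm : ∀ n, (∮ z in C(0, ρ), c n * z ^ n * z ^ (-m - 1))
      = if n = m then 2 * π * I * c m else 0 := by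
    intro n
    rw [circleIntegral.integral_congr hρ.le (g := fun z => c n * z ^ (n - m - 1)),
      circleIntegral.integral_const_mul, circleIntegral_zpow_sub_one hρ]
    · simp only [sub_eq_zero]
      split_ifs with h
      · rw [h, mul_comm]
      · exact mul_zero _
    · intro z hz
      have hz0 : z ≠ 0 := ne_zero_of_mem_sphere hρ.ne' ⟨z, hz⟩
      simp only [mul_assoc, ← zpow_add₀ hz0]
      ring_nf
  have hsum : HasSum (fun n => ∮ z in C(0, ρ), c n * z ^ n * z ^ (-m - 1))
      (∮ z in C(0, ρ), (∑' n, c n * z ^ n) * z ^ (-m - 1)) := by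
    refine intervalIntegral.hasSum_integral_of_dominated_convergence
      (fun n _ => ρ * (‖c n‖ * ρ ^ n * ρ ^ (-m - 1))) (fun n => by
        simp only [deriv_circleMap]; fun_prop) (fun n => ?_) ?_ intervalIntegrable_const ?_
    · refine MeasureTheory.ae_of_all _ fun θ _ => ?_
      simp [norm_zpow, abs_of_pos hρ]
    · exact MeasureTheory.ae_of_all _ fun θ _ => (hs.mul_right _).mul_left _
    · refine MeasureTheory.ae_of_all _ fun θ _ => ((Summable.hasSum ?_).mul_right _).const_smul _
      refine Summable.of_norm ?_
      simpa [norm_zpow, abs_of_pos hρ] using hs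
  rw [← hsum.tsum_eq, tsum_congr hterm, tsum_ite_eq]

lemma HasCoeff.eq (hr0 : 0 < r) (hr1 : r < 1) (hc : HasCoeff r f c) (hd : HasCoeff r f d) :
    c = d := by
  obtain ⟨ρ, hrρ, hρ1⟩ := exists_between hr1
  have hρ0 : 0 < ρ := hr0.trans hrρ
  have hsphere : ∀ z ∈ sphere (0 : ℂ) ρ, z ∈ ARset r := fun z hz => by
    rw [mem_sphere_zero_iff_norm] at hz
    constructor <;> linarith
  have hs : ∀ {e}, HasCoeff r f e → Summable fun n => ‖e n‖ * ρ ^ n := fun he => by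
    simpa [abs_of_pos hρ0] using
      summable_norm_mul_norm_zpow hr0 he.1 (hsphere (ρ : ℂ) (by simp [abs_of_pos hρ0]))
  funext m
  have hI := circleIntegral_tsum_mul_zpow hρ0 (hs hc) m
  rw [circleIntegral.integral_congr hρ0.le (g := fun z => (∑' n, d n * z ^ n) * z ^ (-m - 1))
    fun z hz => by simp only [← hc.2 z (hsphere z hz), ← hd.2 z (hsphere z hz)],
    circleIntegral_tsum_mul_zpow hρ0 (hs hd) m] at hI
  exact mul_left_cancel₀ (by simp [pi_ne_zero]) hI.symm

lemma coeffA_spec (hf : MemH2A r f) : HasCoeff r f (coeffA r f) := by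
  rw [coeffA, dif_pos hf]
  exact hf.choose_spec

lemma HasCoeff.coeffA_eq (hr0 : 0 < r) (hr1 : r < 1) (hc : HasCoeff r f c) : coeffA r f = c :=
  (coeffA_spec ⟨c, hc⟩).eq hr0 hr1 hc

lemma HasCoeff.normA_eq (hr0 : 0 < r) (hr1 : r < 1) (hc : HasCoeff r f c) :
    normA r f = √(coeffNormSq r c) := by
  rw [normA, hc.coeffA_eq hr0 hr1]

lemma HasCoeff.congr (hc : HasCoeff r f c) (h : Set.EqOn f g (ARset r)) : HasCoeff r g c :=
  ⟨hc.1, fun z hz => (h hz).symm.trans (hc.2 z hz)⟩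

lemma hasCoeff_one : HasCoeff r 1 (fun n => if n = 0 then 1 else 0) := by
  refine ⟨summable_of_ne_finset_zero (s := {0}) fun n hn => ?_, fun z _ => ?_⟩
  · simp [Finset.mem_singleton.not.1 hn]
  · rw [tsum_eq_single 0 fun n hn => by simp [hn]]
    simp

lemma summable_wgt_mul_norm_add_sq (hr0 : 0 < r) (hc : Summable fun n => wgt r n * ‖c n‖ ^ 2)
    (hd : Summable fun n => wgt r n * ‖d n‖ ^ 2) :
    Summable fun n => wgt r n * ‖(c + d) n‖ ^ 2 := by
  refine ((hc.add hd).mul_left 2).of_nonneg_of_le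
    (fun n => mul_nonneg (wgt_pos hr0 n).le (sq_nonneg _)) fun n => ?_
  have h : ‖c n + d n‖ ^ 2 ≤ 2 * ‖c n‖ ^ 2 + 2 * ‖d n‖ ^ 2 := by
    nlinarith [norm_add_le (c n) (d n), norm_nonneg (c n + d n), sq_nonneg (‖c n‖ - ‖d n‖)]
  calc wgt r n * ‖c n + d n‖ ^ 2 ≤ wgt r n * (2 * ‖c n‖ ^ 2 + 2 * ‖d n‖ ^ 2) :=
        mul_le_mul_of_nonneg_left h (wgt_pos hr0 n).le
    _ = _ := by ring

lemma sqrt_coeffNormSq_add_le (hr0 : 0 < r) (hc : Summable fun n => wgt r n * ‖c n‖ ^ 2)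
    (hd : Summable fun n => wgt r n * ‖d n‖ ^ 2) :
    √(coeffNormSq r (c + d)) ≤ √(coeffNormSq r c) + √(coeffNormSq r d) := by
  have hsq : ∀ e : ℤ → ℂ, (fun n => (sqrtWgt r n * ‖e n‖) ^ (2 : ℝ))
      = fun n => wgt r n * ‖e n‖ ^ 2 := fun e => by
    funext n; rw [Real.rpow_two, mul_pow, sqrtWgt_sq]
  obtain ⟨hsum, hMink⟩ := Real.Lp_add_le_tsum_of_nonneg one_le_two
    (fun n => mul_nonneg (sqrtWgt_pos hr0 n).le (norm_nonneg (c n)))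
    (fun n => mul_nonneg (sqrtWgt_pos hr0 n).le (norm_nonneg (d n)))
    (by rw [hsq]; exact hc) (by rw [hsq]; exact hd)
  rw [hsq, hsq, ← Real.sqrt_eq_rpow, ← Real.sqrt_eq_rpow, ← Real.sqrt_eq_rpow] at hMink
  refine le_trans (Real.sqrt_le_sqrt ?_) hMink
  refine (summable_wgt_mul_norm_add_sq hr0 hc hd).tsum_le_tsum (fun n => ?_) hsum
  rw [Real.rpow_two, ← sqrtWgt_sq, ← mul_pow, ← mul_add]
  exact pow_le_pow_left₀ (mul_nonneg (sqrtWgt_pos hr0 n).le (norm_nonneg _))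
    (mul_le_mul_of_nonneg_left (norm_add_le _ _) (sqrtWgt_pos hr0 n).le) 2

lemma HasCoeff.add (hr0 : 0 < r) (hf : HasCoeff r f c) (hg : HasCoeff r g d) :
    HasCoeff r (f + g) (c + d) := by
  refine ⟨summable_wgt_mul_norm_add_sq hr0 hf.1 hg.1, fun z hz => ?_⟩
  simp only [Pi.add_apply, add_mul]
  rw [(summable_norm_mul_zpow hr0 hf.1 hz).of_norm.tsum_add
    (summable_norm_mul_zpow hr0 hg.1 hz).of_norm, ← hf.2 z hz, ← hg.2 z hz]

lemma coeffNormSq_const_mul (b : ℂ) (c : ℤ → ℂ) :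
    coeffNormSq r (fun n => b * c n) = ‖b‖ ^ 2 * coeffNormSq r c := by
  rw [coeffNormSq, coeffNormSq, ← tsum_mul_left]
  congr 1; funext n; rw [norm_mul]; ring

lemma HasCoeff.const_mul (b : ℂ) (hf : HasCoeff r f c) :
    HasCoeff r (fun z => b * f z) (fun n => b * c n) := by
  refine ⟨(hf.1.mul_left (‖b‖ ^ 2)).congr fun n => ?_, fun z hz => ?_⟩
  · rw [norm_mul]; ring
  · simp only [hf.2 z hz, ← tsum_mul_left, mul_assoc]

lemma HasCoeff.sub (hr0 : 0 < r) (hf : HasCoeff r f c) (hg : HasCoeff r g d) :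
    HasCoeff r (f - g) (c - d) := by
  have h := hf.add hr0 (hg.const_mul (-1))
  have hfg : (f + fun z => -1 * g z) = f - g := by funext z; simp [sub_eq_add_neg]
  have hcd : (c + fun n => -1 * d n) = c - d := by funext n; simp [sub_eq_add_neg]
  rwa [hfg, hcd] at h

lemma wgt_mul_norm_shift_le (hr0 : 0 < r) (hr1 : r < 1) (c : ℤ → ℂ) (k n : ℤ) :
    wgt r n * ‖c (n - k)‖ ^ 2 ≤ r ^ (-(2 * |k|)) * (wgt r (n - k) * ‖c (n - k)‖ ^ 2) := by
  rw [← mul_assoc]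
  refine mul_le_mul_of_nonneg_right ?_ (sq_nonneg _)
  simpa using wgt_add_le hr0 hr1 (n - k) k

lemma summable_wgt_mul_norm_shift_sq (hr0 : 0 < r) (hr1 : r < 1)
    (hc : Summable fun n => wgt r n * ‖c n‖ ^ 2) (k : ℤ) :
    Summable fun n => wgt r n * ‖c (n - k)‖ ^ 2 :=
  (((Equiv.subRight k).summable_iff.2 hc).mul_left _).of_nonneg_of_le
    (fun n => mul_nonneg (wgt_pos hr0 n).le (sq_nonneg _)) (wgt_mul_norm_shift_le hr0 hr1 c k)

lemma coeffNormSq_shift_le (hr0 : 0 < r) (hr1 : r < 1)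
    (hc : Summable fun n => wgt r n * ‖c n‖ ^ 2) (k : ℤ) :
    coeffNormSq r (fun n => c (n - k)) ≤ r ^ (-(2 * |k|)) * coeffNormSq r c := by
  calc coeffNormSq r (fun n => c (n - k))
      ≤ ∑' n, r ^ (-(2 * |k|)) * (wgt r (n - k) * ‖c (n - k)‖ ^ 2) :=
        (summable_wgt_mul_norm_shift_sq hr0 hr1 hc k).tsum_le_tsum
          (wgt_mul_norm_shift_le hr0 hr1 c k) (((Equiv.subRight k).summable_iff.2 hc).mul_left _)
    _ = r ^ (-(2 * |k|)) * coeffNormSq r c := by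
        rw [tsum_mul_left, coeffNormSq,
          ← (Equiv.subRight k).tsum_eq fun n => wgt r n * ‖c n‖ ^ 2]
        rfl

lemma HasCoeff.zpow_mul (hr0 : 0 < r) (hr1 : r < 1) (k : ℤ) (hf : HasCoeff r f c) :
    HasCoeff r (fun z => z ^ k * f z) (fun n => c (n - k)) := by
  refine ⟨summable_wgt_mul_norm_shift_sq hr0 hr1 hf.1 k, fun z hz => ?_⟩
  have hz0 : z ≠ 0 := norm_pos_iff.1 (norm_pos_of_mem_ARset hr0 hz)
  simp only [hf.2 z hz, ← tsum_mul_left]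
  rw [← (Equiv.subRight k).tsum_eq]
  refine tsum_congr fun n => ?_
  simp only [Equiv.subRight_apply]
  rw [zpow_sub₀ hz0]
  field_simp

lemma MemH2A.add (hr0 : 0 < r) (hf : MemH2A r f) (hg : MemH2A r g) : MemH2A r (f + g) :=
  ⟨_, (coeffA_spec hf).add hr0 (coeffA_spec hg)⟩

lemma MemH2A.sub (hr0 : 0 < r) (hf : MemH2A r f) (hg : MemH2A r g) : MemH2A r (f - g) :=
  ⟨_, (coeffA_spec hf).sub hr0 (coeffA_spec hg)⟩

lemma normA_add_le (hr0 : 0 < r) (hr1 : r < 1) (hf : MemH2A r f) (hg : MemH2A r g) :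
    normA r (f + g) ≤ normA r f + normA r g := by
  rw [((coeffA_spec hf).add hr0 (coeffA_spec hg)).normA_eq hr0 hr1]
  exact sqrt_coeffNormSq_add_le hr0 (coeffA_spec hf).1 (coeffA_spec hg).1

lemma normA_const_mul (hr0 : 0 < r) (hr1 : r < 1) (hf : MemH2A r f) (b : ℂ) :
    normA r (fun z => b * f z) = ‖b‖ * normA r f := by
  rw [((coeffA_spec hf).const_mul b).normA_eq hr0 hr1, coeffNormSq_const_mul,
    Real.sqrt_mul (sq_nonneg _), Real.sqrt_sq (norm_nonneg _), normA]

lemma normA_zpow_mul_le (hr0 : 0 < r) (hr1 : r < 1) (hf : MemH2A r f) (k : ℤ) :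
    normA r (fun z => z ^ k * f z) ≤ r ^ (-|k|) * normA r f := by
  have hc := coeffA_spec hf
  have hsq : (r ^ (-|k|)) ^ 2 = r ^ (-(2 * |k|)) := by
    rw [← zpow_natCast, ← zpow_mul]; congr 1; push_cast; ring
  rw [(hc.zpow_mul hr0 hr1 k).normA_eq hr0 hr1, normA,
    ← Real.sqrt_sq (by positivity : 0 ≤ r ^ (-|k|)), ← Real.sqrt_mul (sq_nonneg _), hsq]
  exact Real.sqrt_le_sqrt (coeffNormSq_shift_le hr0 hr1 hc.1 k)

def MultBoundedBy (r : ℝ) (φ : ℂ → ℂ) (C : ℝ) : Prop :=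
  ∀ f, MemH2A r f → MemH2A r (φ * f) ∧ normA r (φ * f) ≤ C * normA r f

lemma isMult_one : IsMult r 1 := fun f hf => by rwa [one_mul]

lemma IsMult.mul (hφ : IsMult r φ) (hψ : IsMult r ψ) : IsMult r (φ * ψ) := fun f hf => by
  rw [mul_assoc]; exact hφ _ (hψ f hf)

lemma MultBoundedBy.isMult (h : MultBoundedBy r φ C) : IsMult r φ := fun f hf => (h f hf).1

lemma multBoundedBy_zero (hr0 : 0 < r) (hr1 : r < 1) : MultBoundedBy r (fun _ => 0) 0 :=
  fun f _ => by
  have h0 : HasCoeff r ((fun _ => 0) * f) 0 := ⟨by simp, fun z _ => by simp⟩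
  refine ⟨⟨0, h0⟩, ?_⟩
  simp [h0.normA_eq hr0 hr1, coeffNormSq]

lemma multBoundedBy_zpow (hr0 : 0 < r) (hr1 : r < 1) (k : ℤ) :
    MultBoundedBy r (fun z => z ^ k) (r ^ (-|k|)) := fun _ hf =>
  ⟨⟨_, (coeffA_spec hf).zpow_mul hr0 hr1 k⟩, normA_zpow_mul_le hr0 hr1 hf k⟩

lemma MultBoundedBy.const_mul (hr0 : 0 < r) (hr1 : r < 1) (h : MultBoundedBy r φ C) (b : ℂ) :
    MultBoundedBy r (fun z => b * φ z) (‖b‖ * C) := fun f hf => by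
  obtain ⟨hm, hle⟩ := h f hf
  have he : (fun z => b * φ z) * f = fun z => b * (φ * f) z := by
    funext z; simp only [Pi.mul_apply, mul_assoc]
  rw [he, normA_const_mul hr0 hr1 hm, mul_assoc]
  exact ⟨⟨_, (coeffA_spec hm).const_mul b⟩, mul_le_mul_of_nonneg_left hle (norm_nonneg b)⟩

lemma MultBoundedBy.add (hr0 : 0 < r) (hr1 : r < 1) (hφ : MultBoundedBy r φ C)
    (hψ : MultBoundedBy r ψ D) : MultBoundedBy r (φ + ψ) (C + D) := fun f hf => by
  obtain ⟨hφm, hφle⟩ := hφ f hf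
  obtain ⟨hψm, hψle⟩ := hψ f hf
  rw [add_mul]
  refine ⟨hφm.add hr0 hψm, (normA_add_le hr0 hr1 hφm hψm).trans ?_⟩
  linarith

lemma multBoundedBy_sum (hr0 : 0 < r) (hr1 : r < 1) (t : Finset ι) {φ : ι → ℂ → ℂ}
    {C : ι → ℝ} (h : ∀ j ∈ t, MultBoundedBy r (φ j) (C j)) :
    MultBoundedBy r (fun z => ∑ j ∈ t, φ j z) (∑ j ∈ t, C j) := by
  classical
  induction t using Finset.induction_on with
  | empty => simpa using multBoundedBy_zero hr0 hr1
  | insert a s ha ih =>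
    have he : (fun z => ∑ j ∈ insert a s, φ j z) = φ a + fun z => ∑ j ∈ s, φ j z := by
      funext z; simp [Finset.sum_insert ha]
    rw [he, Finset.sum_insert ha]
    exact (h a (mem_insert_self a s)).add hr0 hr1 (ih fun j hj => h j (mem_insert_of_mem hj))

lemma multBoundedBy_monomialSum (hr0 : 0 < r) (hr1 : r < 1) (t : Finset ι) (a : ι → ℂ)
    (e : ι → ℤ) :
    MultBoundedBy r (fun z => ∑ j ∈ t, a j * z ^ e j) (∑ j ∈ t, ‖a j‖ * r ^ (-|e j|)) :=
  multBoundedBy_sum hr0 hr1 t fun j _ => (multBoundedBy_zpow hr0 hr1 (e j)).const_mul hr0 hr1 (a j)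

def monomialCoeff (t : Finset ι) (a : ι → ℂ) (e : ι → ℤ) (n : ℤ) : ℂ :=
  ∑ j ∈ t, if e j = n then a j else 0

lemma monomialCoeff_eq_zero {t : Finset ι} {a : ι → ℂ} {e : ι → ℤ} {n : ℤ}
    (hn : n ∉ t.image e) : monomialCoeff t a e n = 0 :=
  Finset.sum_eq_zero fun j hj => if_neg fun h => hn (Finset.mem_image.2 ⟨j, hj, h⟩)

lemma hasCoeff_monomialSum (t : Finset ι) (a : ι → ℂ) (e : ι → ℤ) :
    HasCoeff r (fun z => ∑ j ∈ t, a j * z ^ e j) (monomialCoeff t a e) := by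
  refine ⟨summable_of_ne_finset_zero (s := t.image e) fun n hn => by
    rw [monomialCoeff_eq_zero hn, norm_zero, sq, mul_zero, mul_zero], fun z _ => ?_⟩
  rw [tsum_eq_sum fun n hn => by rw [monomialCoeff_eq_zero hn, zero_mul]]
  simp only [monomialCoeff, Finset.sum_mul, ite_mul, zero_mul]
  rw [Finset.sum_comm]
  refine Finset.sum_congr rfl fun j hj => ?_
  rw [Finset.sum_ite_eq, if_pos (Finset.mem_image_of_mem e hj)]

lemma coeffNormSq_monomialCoeff (t : Finset ι) (a : ι → ℂ) {e : ι → ℤ}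
    (he : Function.Injective e) :
    coeffNormSq r (monomialCoeff t a e) = ∑ j ∈ t, wgt r (e j) * ‖a j‖ ^ 2 := by
  rw [coeffNormSq, tsum_eq_sum fun n hn => by
      rw [monomialCoeff_eq_zero hn, norm_zero, sq, mul_zero, mul_zero],
    Finset.sum_image he.injOn]
  refine Finset.sum_congr rfl fun j hj => ?_
  classical
  simp only [monomialCoeff, he.eq_iff, Finset.sum_ite_eq', if_pos hj]

lemma hasCoeff_linear (a b : ℂ) :
    HasCoeff r (fun z => a + b * z) (fun n => if n = 0 then a else if n = 1 then b else 0) := by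
  have hsupp : ∀ n ∉ ({0, 1} : Finset ℤ), (if n = 0 then a else if n = 1 then b else 0) = 0 :=
    fun n hn => by simp_all
  refine ⟨summable_of_ne_finset_zero (s := {0, 1}) fun n hn => by simp [hsupp n hn],
    fun z _ => ?_⟩
  rw [tsum_eq_sum fun n hn => by simp [hsupp n hn], Finset.sum_pair zero_ne_one]
  simp

lemma exists_normA_monomialSum_sub_lt (hr0 : 0 < r) (hr1 : r < 1) (hg : MemH2A r g) {δ : ℝ}
    (hδ : 0 < δ) :
    ∃ s : Finset ℤ, normA r ((fun z => ∑ n ∈ s, coeffA r g n * z ^ n) - g) < δ := by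
  set c := coeffA r g
  have hc : HasCoeff r g c := coeffA_spec hg
  obtain ⟨s, hs⟩ := ((tendsto_tsum_compl_atTop_zero fun n => wgt r n * ‖c n‖ ^ 2).eventually
    (gt_mem_nhds (pow_pos hδ 2))).exists
  have hp : HasCoeff r (fun z => ∑ n ∈ s, c n * z ^ n) (monomialCoeff s c id) :=
    hasCoeff_monomialSum s c id
  refine ⟨s, ?_⟩
  rw [(hp.sub hr0 hc).normA_eq hr0 hr1, Real.sqrt_lt' hδ]
  refine lt_of_eq_of_lt ((tsum_congr fun n => ?_).trans
    (tsum_subtype {n | n ∉ s} fun n => wgt r n * ‖c n‖ ^ 2).symm) hs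
  by_cases hn : n ∈ s <;> simp [monomialCoeff, hn]

theorem cyclic_of_forall_exists_normA_mul_sub_one_lt (hr0 : 0 < r) (hr1 : r < 1)
    (hf : MemH2A r f) (h : ∀ δ > 0, ∃ φ, IsMult r φ ∧ normA r (φ * f - 1) < δ) :
    Cyclic r f := by
  refine ⟨hf, fun g hg ε hε => ?_⟩
  obtain ⟨s, hs⟩ := exists_normA_monomialSum_sub_lt hr0 hr1 hg (half_pos hε)
  set p := fun z => ∑ n ∈ s, coeffA r g n * z ^ n
  set C := ∑ n ∈ s, ‖coeffA r g n‖ * r ^ (-|n|)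
  have hp : MultBoundedBy r p C := multBoundedBy_monomialSum hr0 hr1 s _ id
  have hC : 0 ≤ C := by positivity
  obtain ⟨φ, hφ, hφf⟩ := h (ε / 2 / (C + 1)) (by positivity)
  obtain ⟨hm, hle⟩ := hp _ ((hφ f hf).sub hr0 ⟨_, hasCoeff_one⟩)
  have hpg : MemH2A r (p - g) := MemH2A.sub hr0 ⟨_, hasCoeff_monomialSum s _ id⟩ hg
  refine ⟨p * φ, hp.isMult.mul hφ, ?_⟩
  have hsplit : p * φ * f - g = p * (φ * f - 1) + (p - g) := by ring
  have hCε : C * (ε / 2 / (C + 1)) ≤ ε / 2 := by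
    rw [mul_div_assoc']
    exact div_le_of_le_mul₀ (by positivity) (by positivity) (by nlinarith)
  calc normA r (p * φ * f - g) ≤ normA r (p * (φ * f - 1)) + normA r (p - g) :=
        hsplit ▸ normA_add_le hr0 hr1 hm hpg
    _ < ε / 2 + ε / 2 := add_lt_add_of_le_of_lt
        (hle.trans ((mul_le_mul_of_nonneg_left hφf.le hC).trans hCε)) hs
    _ = ε := add_halves ε

def cesaroInv (l : ℂ) (N : ℕ) (z : ℂ) : ℂ :=
  ((N : ℂ) + 1)⁻¹ * ∑ k ∈ range (N + 1), ∑ i ∈ range (k + 1), l ^ i * z ^ (-((i : ℤ) + 1))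

lemma isMult_cesaroInv (hr0 : 0 < r) (hr1 : r < 1) (l : ℂ) (N : ℕ) :
    IsMult r (cesaroInv l N) :=
  ((multBoundedBy_sum hr0 hr1 _ fun k _ => multBoundedBy_monomialSum hr0 hr1 (range (k + 1))
    (fun i => l ^ i) fun i => -((i : ℤ) + 1)).const_mul hr0 hr1 _).isMult

lemma cesaroInv_mul_sub_sub_one (l : ℂ) (N : ℕ) (hz : z ≠ 0) :
    cesaroInv l N z * (z - l) - 1
      = ∑ k ∈ range (N + 1), -(l ^ (k + 1) / ((N : ℂ) + 1)) * z ^ (-((k : ℤ) + 1)) := by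
  have hpow : ∀ i : ℕ, z ^ (-((i : ℤ) + 1)) = z⁻¹ ^ (i + 1) := fun i => by
    rw [inv_pow, ← zpow_natCast, ← zpow_neg]; push_cast; rfl
  have hgeom : ∀ k : ℕ, (∑ i ∈ range (k + 1), l ^ i * z⁻¹ ^ (i + 1)) * (z - l)
      = 1 - (l * z⁻¹) ^ (k + 1) := fun k => by
    rw [← geom_sum_mul_neg, Finset.sum_mul, Finset.sum_mul]
    refine Finset.sum_congr rfl fun i _ => ?_
    rw [mul_pow, pow_succ]
    linear_combination (l ^ i * z⁻¹ ^ i) * mul_inv_cancel₀ hz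
  have hN : (N : ℂ) + 1 ≠ 0 := Nat.cast_add_one_ne_zero N
  calc cesaroInv l N z * (z - l) - 1
      = ((N : ℂ) + 1)⁻¹ * ∑ k ∈ range (N + 1), (1 - (l * z⁻¹) ^ (k + 1)) - 1 := by
        simp only [cesaroInv, hpow, mul_assoc, Finset.sum_mul, hgeom]
    _ = _ := by
        rw [Finset.sum_sub_distrib, sum_const, card_range, nsmul_eq_mul, mul_one, mul_sub,
          Nat.cast_add_one, inv_mul_cancel₀ hN, sub_sub_cancel_left, Finset.mul_sum,
          ← Finset.sum_neg_distrib]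
        refine Finset.sum_congr rfl fun k _ => ?_
        rw [hpow, mul_pow]
        ring

lemma wgt_neg_succ_mul_norm_sq_le (hl : ‖l‖ ≤ r) (N k : ℕ) :
    wgt r (-((k : ℤ) + 1)) * ‖-(l ^ (k + 1) / ((N : ℂ) + 1))‖ ^ 2 ≤ ((N + 1 : ℝ) ^ 2)⁻¹ := by
  have hw : wgt r (-((k : ℤ) + 1)) = ((r ^ (k + 1)) ^ 2)⁻¹ := by
    rw [wgt, if_pos (by omega), ← pow_mul, ← zpow_natCast, ← zpow_neg]
    push_cast; ring_nf
  have hnorm : ‖-(l ^ (k + 1) / ((N : ℂ) + 1))‖ = ‖l‖ ^ (k + 1) / (N + 1) := by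
    rw [norm_neg, norm_div, norm_pow]
    exact_mod_cast congrArg _ (Complex.norm_natCast (N + 1))
  calc wgt r (-((k : ℤ) + 1)) * ‖-(l ^ (k + 1) / ((N : ℂ) + 1))‖ ^ 2
      = (‖l‖ ^ (k + 1)) ^ 2 / (r ^ (k + 1)) ^ 2 * ((N + 1 : ℝ) ^ 2)⁻¹ := by
        rw [hw, hnorm, div_pow]; ring
    _ ≤ 1 * ((N + 1 : ℝ) ^ 2)⁻¹ := by
        gcongr
        exact div_le_one_of_le₀ (by gcongr) (by positivity)
    _ = _ := one_mul _

lemma normA_cesaroInv_mul_sub_one_le (hr0 : 0 < r) (hr1 : r < 1) (hl : ‖l‖ ≤ r) (N : ℕ) :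
    normA r (cesaroInv l N * (fun z => z - l) - 1) ≤ √((N + 1 : ℝ)⁻¹) := by
  have he : Function.Injective fun k : ℕ => -((k : ℤ) + 1) := fun i j h => by simpa using h
  have hE := (hasCoeff_monomialSum (r := r) (range (N + 1))
    (fun k => -(l ^ (k + 1) / ((N : ℂ) + 1))) fun k : ℕ => -((k : ℤ) + 1)).congr
    (g := cesaroInv l N * (fun z => z - l) - 1) fun z hz =>
      (cesaroInv_mul_sub_sub_one l N (norm_pos_iff.1 (norm_pos_of_mem_ARset hr0 hz))).symm
  rw [hE.normA_eq hr0 hr1, coeffNormSq_monomialCoeff _ _ he]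
  refine Real.sqrt_le_sqrt ((Finset.sum_le_sum fun k _ => wgt_neg_succ_mul_norm_sq_le hl N k).trans
    (le_of_eq ?_))
  simp only [Finset.sum_const, card_range, nsmul_eq_mul]
  push_cast
  field_simp

lemma memH2A_sub_const (l : ℂ) : MemH2A r (fun z => z - l) :=
  ⟨_, (hasCoeff_linear (-l) 1).congr fun z _ => by ring⟩

theorem cyclic_sub_of_norm_le (hr0 : 0 < r) (hr1 : r < 1) (hl : ‖l‖ ≤ r) :
    Cyclic r (fun z => z - l) := by
  refine cyclic_of_forall_exists_normA_mul_sub_one_lt hr0 hr1 (memH2A_sub_const l)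
    fun δ hδ => ?_
  obtain ⟨N, hN⟩ := exists_nat_gt (δ ^ 2)⁻¹
  refine ⟨cesaroInv l N, isMult_cesaroInv hr0 hr1 l N,
    (normA_cesaroInv_mul_sub_one_le hr0 hr1 hl N).trans_lt ?_⟩
  rw [Real.sqrt_lt' hδ]
  exact inv_lt_of_inv_lt₀ (by positivity) (hN.trans (lt_add_one _))

theorem not_cyclic_of_apply_eq_zero (hr0 : 0 < r) (hr1 : r < 1) (hz : z ∈ ARset r)
    (hfz : f z = 0) : ¬ Cyclic r f := by
  rintro ⟨hf, hcyc⟩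
  set K := evalBound r z
  have hK : 0 ≤ K := tsum_nonneg fun n => div_nonneg (zpow_nonneg (norm_nonneg z) n)
    (sqrtWgt_pos hr0 n).le
  obtain ⟨φ, hφ, hlt⟩ := hcyc 1 ⟨_, hasCoeff_one⟩ (K + 1)⁻¹ (by positivity)
  have hval := (coeffA_spec ((hφ f hf).sub hr0 ⟨_, hasCoeff_one⟩)).norm_apply_le hr0 hz
  simp only [Pi.sub_apply, Pi.mul_apply, hfz, mul_zero, Pi.one_apply, zero_sub, norm_neg,
    norm_one] at hval
  refine lt_irrefl (1 : ℝ) ?_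
  calc 1 ≤ normA r (φ * f - 1) * K := hval
    _ ≤ (K + 1)⁻¹ * K := mul_le_mul_of_nonneg_right hlt.le hK
    _ < 1 := by rw [inv_mul_lt_iff₀ (by positivity)]; linarith

lemma innerA_self (g : ℂ → ℂ) : innerA r g g = (coeffNormSq r (coeffA r g) : ℂ) := by
  rw [innerA, coeffNormSq, Complex.ofReal_tsum]
  refine tsum_congr fun n => ?_
  rw [mul_assoc, Complex.mul_conj, Complex.normSq_eq_norm_sq]
  push_cast; ring

lemma normA_eq_of_sameP (hfg : SameP r f g) : normA r g = normA r f := by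
  have h := hfg 1 isMult_one
  rw [one_mul, one_mul, innerA_self, innerA_self] at h
  rw [normA, normA, Complex.ofReal_injective h]

lemma bddAbove_norm_apply_sameP (hr0 : 0 < r) (hz : z ∈ ARset r) :
    BddAbove {t : ℝ | ∃ g, MemH2A r g ∧ SameP r f g ∧ t = ‖g z‖} := by
  refine ⟨normA r f * evalBound r z, ?_⟩
  rintro _ ⟨g, hg, hfg, rfl⟩
  rw [← normA_eq_of_sameP hfg]
  exact (coeffA_spec hg).norm_apply_le hr0 hz

theorem not_freeOuter_of_sameP (hr0 : 0 < r) (hg : MemH2A r g) (hfg : SameP r f g)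
    (hz : z ∈ ARset r) (hlt : ‖f z‖ < ‖g z‖) : ¬ FreeOuter r f := by
  rintro ⟨-, hfo⟩
  rw [hfo z hz] at hlt
  exact hlt.not_ge (le_csSup (bddAbove_norm_apply_sameP hr0 hz) ⟨g, hg, hfg, rfl⟩)

lemma innerA_eq_tsum (hr0 : 0 < r) (hr1 : r < 1) (hf : HasCoeff r f c) (hg : HasCoeff r g d) :
    innerA r f g = ∑' n, (wgt r n : ℂ) * c n * conj (d n) := by
  rw [innerA, hf.coeffA_eq hr0 hr1, hg.coeffA_eq hr0 hr1]

lemma innerA_mul_linear (hr0 : 0 < r) (hr1 : r < 1) (hφ : IsMult r φ) (a b : ℂ) :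
    innerA r (φ * fun z => a + b * z) (fun z => a + b * z)
      = (a * conj a + b * conj b) * coeffA r φ 0 + conj a * b * coeffA r φ (-1)
        + a * conj b * coeffA r φ 1 := by
  set p := coeffA r φ
  have hp : HasCoeff r φ p := coeffA_spec (by simpa using hφ 1 ⟨_, hasCoeff_one⟩)
  have hmul : HasCoeff r (φ * fun z => a + b * z) (fun n => a * p n + b * p (n - 1)) :=
    ((hp.const_mul a).add hr0 ((hp.zpow_mul hr0 hr1 1).const_mul b)).congr fun z _ => by
      simp only [Pi.add_apply, Pi.mul_apply, zpow_one]; ring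
  rw [innerA_eq_tsum hr0 hr1 hmul (hasCoeff_linear a b),
    tsum_eq_sum (s := {0, 1}) fun n hn => by simp_all, Finset.sum_pair zero_ne_one]
  simp [wgt]
  ring

lemma sameP_linear (hr0 : 0 < r) (hr1 : r < 1) (a b : ℂ) :
    SameP r (fun z => a + b * z) (fun z => conj b + conj a * z) := by
  intro φ hφ
  rw [innerA_mul_linear hr0 hr1 hφ, innerA_mul_linear hr0 hr1 hφ]
  simp only [Complex.conj_conj]
  ring

lemma norm_sub_lt_norm_one_sub_conj_mul (hl : ‖l‖ < 1) (hz : ‖z‖ < 1) :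
    ‖z - l‖ < ‖1 - conj l * z‖ := by
  have key : ‖1 - conj l * z‖ ^ 2 - ‖z - l‖ ^ 2 = (1 - ‖l‖ ^ 2) * (1 - ‖z‖ ^ 2) := by
    simp only [Complex.sq_norm, Complex.normSq_apply, Complex.sub_re, Complex.sub_im,
      Complex.mul_re, Complex.mul_im, Complex.conj_re, Complex.conj_im, Complex.one_re,
      Complex.one_im]
    ring
  have hpos : 0 < (1 - ‖l‖ ^ 2) * (1 - ‖z‖ ^ 2) := by
    have := norm_nonneg l; have := norm_nonneg z
    apply mul_pos <;> nlinarith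
  exact (sq_lt_sq₀ (norm_nonneg _) (norm_nonneg _)).1 (by linarith)

theorem not_freeOuter_sub (hr0 : 0 < r) (hr1 : r < 1) (hl : ‖l‖ < 1) :
    ¬ FreeOuter r (fun z => z - l) := by
  obtain ⟨ρ, hrρ, hρ1⟩ := exists_between hr1
  have hρ : ‖(ρ : ℂ)‖ = ρ := by simp [abs_of_pos (hr0.trans hrρ)]
  have hz : (ρ : ℂ) ∈ ARset r := ⟨hρ.symm ▸ hrρ, hρ.symm ▸ hρ1⟩
  have hfg : SameP r (fun z => z - l) (fun z => 1 - conj l * z) := by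
    convert sameP_linear hr0 hr1 (-l) 1 using 2
    · ring
    · simp [sub_eq_add_neg]
  exact not_freeOuter_of_sameP hr0 ⟨_, (hasCoeff_linear 1 (-conj l)).congr fun z _ => by ring⟩
    hfg hz (norm_sub_lt_norm_one_sub_conj_mul hl hz.2)

end Annulus

open Annulus in
/-- If `r < |λ| < 1` then `z - λ` is not cyclic (hence not free outer)
in `ℋ²(A_r)`; if `|λ| ≤ r` then `z - λ` is cyclic but not free outer. -/
theorem statement16 (r : ℝ) (hr0 : 0 < r) (hr1 : r < 1) (l : ℂ) :
    (r < ‖l‖ → ‖l‖ < 1 →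
      ¬ Cyclic r (fun z => z - l) ∧ ¬ FreeOuter r (fun z => z - l)) ∧
    (‖l‖ ≤ r →
      Cyclic r (fun z => z - l) ∧ ¬ FreeOuter r (fun z => z - l)) :=
  ⟨fun hrl hl1 => ⟨not_cyclic_of_apply_eq_zero hr0 hr1 (z := l) ⟨hrl, hl1⟩ (sub_self l),
      not_freeOuter_sub hr0 hr1 hl1⟩,
    fun hl => ⟨cyclic_sub_of_norm_le hr0 hr1 hl, not_freeOuter_sub hr0 hr1 (hl.trans_lt hr1)⟩⟩
end
end

section
/- Fix r with 0<r<1 and define u:A_r→ℂ² by u(z)=(z/√(r²+1), r/(√(r²+1)·z)). Then ‖u(z)‖_{ℂ²}<1 for every z∈A_r, and for all λ,μ∈A_r one has k_r(λ,μ) = ((1−r²)/(1+r²)) · 1/(1−⟨u(λ),u(μ)⟩_{ℂ²}), where ⟨u(λ),u(μ)⟩_{ℂ²}=u₁(λ)·conj(u₁(μ))+u₂(λ)·conj(u₂(μ)). -/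
/-!
With `w = λ μ̄`, the inner product is `⟨u(λ), u(μ)⟩ = (w + r²/w)/(1 + r²)`, and the denominator
of the kernel factors as `(1 - w)(1 - r²/w) = 1 + r² - w - r²/w`. For `λ = μ = z` and `t = |z|²`
this gives `1 - ‖u(z)‖² = (1 - t)(t - r²)/(t(1 + r²))`, positive on the annulus.
-/

noncomputable section

namespace Annulus

lemma ne_zero_of_mem_ARset {r : ℝ} (hr : 0 ≤ r) {z : ℂ} (hz : z ∈ ARset r) : z ≠ 0 :=
  norm_pos_iff.mp (hr.trans_lt hz.1)

lemma norm_sq_mem_Ioo_of_mem_ARset {r : ℝ} (hr : 0 ≤ r) {z : ℂ} (hz : z ∈ ARset r) :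
    ‖z‖ ^ 2 ∈ Set.Ioo (r ^ 2) 1 :=
  ⟨pow_lt_pow_left₀ hz.1 hr two_ne_zero, pow_lt_one₀ (norm_nonneg z) hz.2 two_ne_zero⟩

end Annulus

lemma add_div_lt_one_add {a t : ℝ} (ha : 0 ≤ a) (hat : a < t) (ht : t < 1) :
    t + a / t < 1 + a := by
  have ht0 : 0 < t := ha.trans_lt hat
  have key : 1 + a - (t + a / t) = (1 - t) * (t - a) / t := by field_simp; ring
  exact sub_pos.mp (key ▸ div_pos (mul_pos (by linarith) (by linarith)) ht0)

namespace Complex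

open ComplexConjugate

lemma norm_div_ofReal_sq_add_norm_div_ofReal_mul_sq (a c : ℝ) (z : ℂ) :
    ‖z / (c : ℂ)‖ ^ 2 + ‖(a : ℂ) / ((c : ℂ) * z)‖ ^ 2 =
      (‖z‖ ^ 2 + a ^ 2 / ‖z‖ ^ 2) / c ^ 2 := by
  simp only [norm_div, norm_mul, norm_real, Real.norm_eq_abs, div_pow, mul_pow, sq_abs]
  ring

lemma div_ofReal_mul_conj_add_div_ofReal_mul_conj (a c : ℝ) (l m : ℂ) :
    l / c * conj (m / c) + a / (c * l) * conj (a / (c * m)) =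
      (l * conj m + a ^ 2 / (l * conj m)) / (c : ℂ) ^ 2 := by
  simp only [map_div₀, map_mul, conj_ofReal]
  ring

lemma one_sub_add_div_div_one_add {w a : ℂ} (hw : w ≠ 0) (ha : 1 + a ≠ 0) :
    1 - (w + a / w) / (1 + a) = (1 - w) * (1 - a / w) / (1 + a) := by
  field_simp
  ring

end Complex

open Annulus in
theorem statement17_general (r : ℝ) (hr0 : 0 < r) :
    (∀ z ∈ ARset r,
      ‖z / (Real.sqrt (r ^ 2 + 1) : ℂ)‖ ^ 2 +
        ‖(r : ℂ) / ((Real.sqrt (r ^ 2 + 1) : ℂ) * z)‖ ^ 2 < 1) ∧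
    (∀ l ∈ ARset r, ∀ m ∈ ARset r,
      ((1 - r ^ 2 : ℝ) : ℂ) /
          ((1 - l * (starRingEnd ℂ) m) * (1 - (r : ℂ) ^ 2 / (l * (starRingEnd ℂ) m))) =
        (((1 - r ^ 2) / (1 + r ^ 2) : ℝ) : ℂ) *
          (1 / (1 -
            ((l / (Real.sqrt (r ^ 2 + 1) : ℂ)) *
                (starRingEnd ℂ) (m / (Real.sqrt (r ^ 2 + 1) : ℂ)) +
              ((r : ℂ) / ((Real.sqrt (r ^ 2 + 1) : ℂ) * l)) *
                (starRingEnd ℂ) ((r : ℂ) / ((Real.sqrt (r ^ 2 + 1) : ℂ) * m)))))) := by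
  have hs : (Real.sqrt (r ^ 2 + 1) : ℂ) ^ 2 = 1 + (r : ℂ) ^ 2 := by
    rw [← Complex.ofReal_pow, Real.sq_sqrt (by positivity)]
    push_cast
    ring
  refine ⟨fun z hz => ?_, fun l hl m hm => ?_⟩
  · obtain ⟨hrz, hz1⟩ := norm_sq_mem_Ioo_of_mem_ARset hr0.le hz
    rw [Complex.norm_div_ofReal_sq_add_norm_div_ofReal_mul_sq, Real.sq_sqrt (by positivity),
      div_lt_one (by positivity), add_comm (r ^ 2)]
    exact add_div_lt_one_add (sq_nonneg r) hrz hz1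
  · have hw : l * (starRingEnd ℂ) m ≠ 0 := mul_ne_zero (ne_zero_of_mem_ARset hr0.le hl)
      ((map_ne_zero _).mpr (ne_zero_of_mem_ARset hr0.le hm))
    have hr : (1 : ℂ) + (r : ℂ) ^ 2 ≠ 0 := by exact_mod_cast (by positivity : (1 : ℝ) + r ^ 2 ≠ 0)
    rw [Complex.div_ofReal_mul_conj_add_div_ofReal_mul_conj, hs,
      Complex.one_sub_add_div_div_one_add hw hr, one_div_div]
    push_cast
    exact (div_mul_div_cancel₀ hr).symm

open Annulus in
/-- The map `u(z) = (z/√(r²+1), r/(√(r²+1) z))` sends `A_r` into `𝔹₂`, and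
`k_r(λ,μ) = ((1-r²)/(1+r²)) · 1/(1 - ⟨u(λ), u(μ)⟩)` for all `λ, μ ∈ A_r`. -/
theorem statement17 (r : ℝ) (hr0 : 0 < r) (hr1 : r < 1) :
    (∀ z ∈ ARset r,
      ‖z / (Real.sqrt (r ^ 2 + 1) : ℂ)‖ ^ 2 +
        ‖(r : ℂ) / ((Real.sqrt (r ^ 2 + 1) : ℂ) * z)‖ ^ 2 < 1) ∧
    (∀ l ∈ ARset r, ∀ m ∈ ARset r,
      ((1 - r ^ 2 : ℝ) : ℂ) /
          ((1 - l * (starRingEnd ℂ) m) * (1 - (r : ℂ) ^ 2 / (l * (starRingEnd ℂ) m))) =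
        (((1 - r ^ 2) / (1 + r ^ 2) : ℝ) : ℂ) *
          (1 / (1 -
            ((l / (Real.sqrt (r ^ 2 + 1) : ℂ)) *
                (starRingEnd ℂ) (m / (Real.sqrt (r ^ 2 + 1) : ℂ)) +
              ((r : ℂ) / ((Real.sqrt (r ^ 2 + 1) : ℂ) * l)) *
                (starRingEnd ℂ) ((r : ℂ) / ((Real.sqrt (r ^ 2 + 1) : ℂ) * m)))))) :=
  statement17_general r hr0
end
end

section
/- Fix r with 0<r<1 and let φ be a holomorphic function on the unit disk 𝔻 with |φ(z)|≤1 for all z∈𝔻. Then the kernel (λ,μ) ↦ (1−φ(λ)·conj(φ(μ)))·k_r(λ,μ) is positive semidefinite on A_r×A_r. -/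
noncomputable section

/-!
The kernel is the Schur (entrywise) product of Pick's kernel
`(1 - φ(λ) conj φ(μ)) / (1 - λ conj μ)` of the Schur function `φ` with `1 - r²` times the Szegő
kernel `1 / (1 - w conj v)` at the points `w = r / λ`, `v = r / μ` of the disk, since
`r² / (λ conj μ) = (r / λ) conj (r / μ)`. Both factors are positive semidefinite, hence so is
their product.

For Pick's kernel, dilate `φ` so that it is holomorphic across the unit circle; positivity
survives the limit `s → 1⁻`. Realise `H²` by integrals over the unit circle, let
`k_ζ(w) = 1 / (1 - conj ζ · w)` and put `h = ∑ xⱼ k_{zⱼ}`, `u = ∑ xⱼ conj φ(zⱼ) k_{zⱼ}`.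
The quadratic form is `‖h‖² - ‖u‖²`, and Cauchy's formula gives `⟨φ u, h⟩ = ‖u‖²`, so
`|φ| ≤ 1` on the circle yields `2 ‖u‖² ≤ ‖h‖² + ‖φ u‖² ≤ ‖h‖² + ‖u‖²`.
-/
section

open Real Complex Metric Filter Topology Matrix ComplexConjugate
open scoped ComplexOrder

namespace Matrix

variable {n 𝕜 : Type*} [Fintype n] [RCLike 𝕜]

theorem PosSemidef.of_tendsto {α : Type*} {l : Filter α} [l.NeBot]
    {A : α → Matrix n n 𝕜} {B : Matrix n n 𝕜} (hA : Tendsto A l (𝓝 B))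
    (h : ∀ᶠ a in l, (A a).PosSemidef) : B.PosSemidef := by
  rw [posSemidef_iff_dotProduct_mulVec]
  refine ⟨?_, fun x => ?_⟩
  · have hAH : Tendsto (fun a => (A a)ᴴ) l (𝓝 Bᴴ) :=
      (continuous_id.matrix_conjTranspose.tendsto B).comp hA
    exact tendsto_nhds_unique (hAH.congr' (h.mono fun a ha => ha.isHermitian)) hA
  · have hq : Tendsto (fun a => star x ⬝ᵥ (A a *ᵥ x)) l (𝓝 (star x ⬝ᵥ (B *ᵥ x))) :=
      ((continuous_const.dotProduct (continuous_id.matrix_mulVec continuous_const)).tendsto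
        B).comp hA
    exact ge_of_tendsto hq (h.mono fun a ha => ha.dotProduct_mulVec_nonneg x)

end Matrix

lemma DiffContOnCl.continuous_comp_circleMap {G : ℂ → ℂ} {c : ℂ} {R : ℝ} (hR : 0 < R)
    (hG : DiffContOnCl ℂ G (ball c R)) : Continuous fun θ => G (circleMap c R θ) := by
  refine hG.continuousOn.comp_continuous (continuous_circleMap c R) fun θ => ?_
  rw [closure_ball c hR.ne']
  exact circleMap_mem_closedBall c hR.le θ

lemma integral_normSq_le_of_integral_mul_conj_eq {a b : ℝ} (hab : a ≤ b) {f g u : ℝ → ℂ}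
    (hf : Continuous f) (hg : Continuous g) (hu : Continuous u) (hgu : ∀ θ, ‖g θ‖ ≤ ‖u θ‖)
    (h : ∫ θ in a..b, g θ * conj (f θ) = ∫ θ in a..b, u θ * conj (u θ)) :
    ∫ θ in a..b, normSq (u θ) ≤ ∫ θ in a..b, normSq (f θ) := by
  have hgf : Continuous fun θ => g θ * conj (f θ) := hg.mul (continuous_conj.comp hf)
  have hpt : ∀ θ, 2 * (g θ * conj (f θ)).re ≤ normSq (f θ) + normSq (u θ) := by
    intro θ
    have h0 := normSq_nonneg (f θ - g θ)
    have hgu2 : normSq (g θ) ≤ normSq (u θ) := by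
      rw [normSq_eq_norm_sq, normSq_eq_norm_sq]; gcongr; exact hgu θ
    rw [normSq_sub] at h0
    have : (f θ * conj (g θ)).re = (g θ * conj (f θ)).re := by
      rw [← conj_re, map_mul, conj_conj, mul_comm]
    linarith
  have hre : ∫ θ in a..b, (g θ * conj (f θ)).re = ∫ θ in a..b, normSq (u θ) := by
    have := congrArg re h
    simp only [mul_conj, intervalIntegral.integral_ofReal, ofReal_re] at this
    rw [← this]
    exact intervalIntegral.intervalIntegral_re (hgf.intervalIntegrable _ _)
  have hfi : IntervalIntegrable (fun θ => normSq (f θ)) MeasureTheory.volume a b :=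
    (continuous_normSq.comp hf).intervalIntegrable _ _
  have hui : IntervalIntegrable (fun θ => normSq (u θ)) MeasureTheory.volume a b :=
    (continuous_normSq.comp hu).intervalIntegrable _ _
  have hmono : ∫ θ in a..b, 2 * (g θ * conj (f θ)).re ≤
      ∫ θ in a..b, (normSq (f θ) + normSq (u θ)) := intervalIntegral.integral_mono_on hab
    ((continuous_const.mul (continuous_re.comp hgf)).intervalIntegrable _ _) (hfi.add hui)
    fun θ _ => hpt θ
  rw [intervalIntegral.integral_const_mul, hre, intervalIntegral.integral_add hfi hui] at hmono
  linarith

def szegoKernel (μ w : ℂ) : ℂ := (1 - conj μ * w)⁻¹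

lemma one_sub_conj_mul_ne_zero {μ w : ℂ} (hμ : ‖μ‖ < 1) (hw : ‖w‖ ≤ 1) :
    1 - conj μ * w ≠ 0 := by
  have hlt : ‖conj μ * w‖ < 1 := by
    rw [norm_mul, RCLike.norm_conj]
    calc ‖μ‖ * ‖w‖ ≤ ‖μ‖ * 1 := by gcongr
      _ < 1 := by simpa using hμ
  exact sub_ne_zero.2 fun h => hlt.ne (by rw [← h, norm_one])

lemma differentiableOn_szegoKernel {μ : ℂ} (hμ : ‖μ‖ < 1) :
    DifferentiableOn ℂ (szegoKernel μ) (closedBall 0 1) :=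
  ((differentiableOn_const _).sub (differentiableOn_id.const_mul _)).inv fun _ hw =>
    one_sub_conj_mul_ne_zero hμ (by simpa using hw)

lemma integral_mul_conj_szegoKernel {G : ℂ → ℂ} (hG : DiffContOnCl ℂ G (ball 0 1)) {μ : ℂ}
    (hμ : ‖μ‖ < 1) :
    ∫ θ in 0..2 * π, G (circleMap 0 1 θ) * conj (szegoKernel μ (circleMap 0 1 θ)) =
      2 * π * G μ := by
  have hCauchy := hG.circleIntegral_sub_inv_smul (mem_ball_zero_iff.2 hμ)
  rw [circleIntegral] at hCauchy
  have hpt : ∀ θ : ℝ, G (circleMap 0 1 θ) * conj (szegoKernel μ (circleMap 0 1 θ)) =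
      I⁻¹ * (deriv (circleMap 0 1) θ • (circleMap 0 1 θ - μ)⁻¹ • G (circleMap 0 1 θ)) := by
    intro θ
    have he : ‖circleMap 0 1 θ‖ = 1 := by simp
    have he0 : circleMap 0 1 θ ≠ 0 := norm_ne_zero_iff.1 (by simp [he])
    have heμ : circleMap 0 1 θ - μ ≠ 0 := sub_ne_zero.2 fun h => hμ.ne (h ▸ he)
    rw [szegoKernel, deriv_circleMap, smul_eq_mul, smul_eq_mul, map_inv₀, map_sub, map_one,
      map_mul, conj_conj, ← inv_eq_conj he]
    field_simp
  rw [intervalIntegral.integral_congr fun θ _ => hpt θ, intervalIntegral.integral_const_mul,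
    hCauchy, smul_eq_mul]
  field_simp

variable {ι : Type*}

def szegoMatrix (z : ι → ℂ) : Matrix ι ι ℂ :=
  of fun i j => szegoKernel (z j) (z i)

def pickMatrix (φ : ℂ → ℂ) (z : ι → ℂ) : Matrix ι ι ℂ :=
  of fun i j => (1 - φ (z i) * conj (φ (z j))) * szegoMatrix z i j

def szegoSum [Fintype ι] (z a : ι → ℂ) (w : ℂ) : ℂ :=
  ∑ i, a i * szegoKernel (z i) w

lemma pickMatrix_zero (z : ι → ℂ) : pickMatrix (fun _ => 0) z = szegoMatrix z := by
  ext i j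
  simp [pickMatrix]

lemma isHermitian_pickMatrix (φ : ℂ → ℂ) (z : ι → ℂ) : (pickMatrix φ z).IsHermitian := by
  ext i j
  simp only [pickMatrix, szegoMatrix, szegoKernel, conjTranspose_apply, of_apply,
    RCLike.star_def, map_mul, map_sub, map_one, map_inv₀, conj_conj]
  ring

variable [Fintype ι]

lemma star_dotProduct_pickMatrix_mulVec (φ : ℂ → ℂ) (z x : ι → ℂ) :
    star x ⬝ᵥ (pickMatrix φ z *ᵥ x) =
      star x ⬝ᵥ (szegoMatrix z *ᵥ x) -
        star (fun i => conj (φ (z i)) * x i) ⬝ᵥ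
          (szegoMatrix z *ᵥ fun i => conj (φ (z i)) * x i) := by
  simp only [dotProduct, mulVec, pickMatrix, of_apply, Pi.star_apply, RCLike.star_def,
    map_mul, conj_conj, Finset.mul_sum, ← Finset.sum_sub_distrib]
  refine Finset.sum_congr rfl fun i _ => Finset.sum_congr rfl fun j _ => ?_
  ring

lemma diffContOnCl_szegoSum {z : ι → ℂ} (hz : ∀ i, ‖z i‖ < 1) (a : ι → ℂ) :
    DiffContOnCl ℂ (szegoSum z a) (ball 0 1) := by
  refine DifferentiableOn.diffContOnCl ?_
  rw [closure_ball 0 one_ne_zero]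
  exact DifferentiableOn.fun_sum fun i _ => (differentiableOn_szegoKernel (hz i)).const_mul _

lemma integral_mul_conj_szegoSum {G : ℂ → ℂ} (hG : DiffContOnCl ℂ G (ball 0 1))
    {z : ι → ℂ} (hz : ∀ i, ‖z i‖ < 1) (a : ι → ℂ) :
    ∫ θ in 0..2 * π, G (circleMap 0 1 θ) * conj (szegoSum z a (circleMap 0 1 θ)) =
      2 * π * ∑ i, conj (a i) * G (z i) := by
  have hGc := hG.continuous_comp_circleMap one_pos
  simp only [szegoSum, map_sum, map_mul, Finset.mul_sum]
  have hkc : ∀ i, Continuous fun θ => szegoKernel (z i) (circleMap 0 1 θ) := fun i =>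
    (differentiableOn_szegoKernel (hz i)).continuousOn.comp_continuous (continuous_circleMap 0 1)
      (circleMap_mem_closedBall 0 zero_le_one)
  rw [intervalIntegral.integral_finsetSum fun i _ => Continuous.intervalIntegrable
    (by exact hGc.mul (continuous_const.mul (continuous_conj.comp (hkc i)))) _ _]
  refine Finset.sum_congr rfl fun i _ => ?_
  simp_rw [mul_left_comm (G _), intervalIntegral.integral_const_mul,
    integral_mul_conj_szegoKernel hG (hz i)]
  ring

lemma star_dotProduct_szegoMatrix_mulVec {z : ι → ℂ} (hz : ∀ i, ‖z i‖ < 1) (a : ι → ℂ) :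
    star a ⬝ᵥ (szegoMatrix z *ᵥ a) =
      ((2 * π)⁻¹ * ∫ θ in 0..2 * π, normSq (szegoSum z a (circleMap 0 1 θ)) : ℝ) := by
  have h := integral_mul_conj_szegoSum (diffContOnCl_szegoSum hz a) hz a
  simp only [mul_conj, intervalIntegral.integral_ofReal] at h
  push_cast
  rw [h]
  field_simp
  simp only [dotProduct, mulVec, szegoSum, szegoMatrix, of_apply, Pi.star_apply, RCLike.star_def,
    Finset.mul_sum]
  refine Finset.sum_congr rfl fun i _ => Finset.sum_congr rfl fun j _ => ?_
  ring

theorem posSemidef_pickMatrix_of_diffContOnCl {ψ : ℂ → ℂ} (hψ : DiffContOnCl ℂ ψ (ball 0 1))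
    (hψb : ∀ w ∈ sphere (0 : ℂ) 1, ‖ψ w‖ ≤ 1) {z : ι → ℂ} (hz : ∀ i, ‖z i‖ < 1) :
    (pickMatrix ψ z).PosSemidef := by
  refine posSemidef_iff_dotProduct_mulVec.2 ⟨isHermitian_pickMatrix ψ z, fun x => ?_⟩
  set y : ι → ℂ := fun i => conj (ψ (z i)) * x i
  have hψy : DiffContOnCl ℂ (fun w => ψ w * szegoSum z y w) (ball 0 1) :=
    hψ.smul (diffContOnCl_szegoSum hz y)
  have hN : ∫ θ in 0..2 * π, normSq (szegoSum z y (circleMap 0 1 θ)) ≤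
      ∫ θ in 0..2 * π, normSq (szegoSum z x (circleMap 0 1 θ)) := by
    refine integral_normSq_le_of_integral_mul_conj_eq two_pi_pos.le
      ((diffContOnCl_szegoSum hz x).continuous_comp_circleMap one_pos)
      (hψy.continuous_comp_circleMap one_pos)
      ((diffContOnCl_szegoSum hz y).continuous_comp_circleMap one_pos) (fun θ => ?_) ?_
    · rw [norm_mul]
      exact mul_le_of_le_one_left (norm_nonneg _) (hψb _ (circleMap_mem_sphere 0 zero_le_one θ))
    · rw [integral_mul_conj_szegoSum hψy hz x,
        integral_mul_conj_szegoSum (diffContOnCl_szegoSum hz y) hz y]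
      simp only [y, map_mul, conj_conj, mul_assoc, mul_left_comm (conj (x _))]
  rw [star_dotProduct_pickMatrix_mulVec, star_dotProduct_szegoMatrix_mulVec hz,
    star_dotProduct_szegoMatrix_mulVec hz, ← ofReal_sub, zero_le_real, ← mul_sub]
  exact mul_nonneg (by positivity) (sub_nonneg.2 hN)

theorem posSemidef_szegoMatrix {z : ι → ℂ} (hz : ∀ i, ‖z i‖ < 1) :
    (szegoMatrix z).PosSemidef :=
  pickMatrix_zero z ▸ posSemidef_pickMatrix_of_diffContOnCl diffContOnCl_const (by simp) hz

theorem posSemidef_pickMatrix {φ : ℂ → ℂ} (hφd : DifferentiableOn ℂ φ (ball 0 1))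
    (hφb : ∀ w ∈ ball (0 : ℂ) 1, ‖φ w‖ ≤ 1) {z : ι → ℂ} (hz : ∀ i, ‖z i‖ < 1) :
    (pickMatrix φ z).PosSemidef := by
  set P : ℝ → Matrix ι ι ℂ := fun s => pickMatrix (fun w => φ (s * w)) fun i => z i / s
  have hP1 : P 1 = pickMatrix φ z := by simp [P]
  have hPc : ContinuousAt P 1 := by
    have hφc : ∀ i, ContinuousAt (fun s : ℝ => φ (s * (z i / s))) 1 := fun i =>
      ContinuousAt.comp_of_eq
        (hφd.differentiableAt (isOpen_ball.mem_nhds (by simpa using hz i))).continuousAt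
        (by fun_prop (disch := norm_num)) (by simp)
    refine continuousAt_pi.2 fun i => continuousAt_pi.2 fun j => ?_
    simp only [P, pickMatrix, szegoMatrix, szegoKernel, of_apply]
    refine (continuousAt_const.sub ((hφc i).mul (continuous_conj.continuousAt.comp (hφc j)))).mul
      (ContinuousAt.inv₀ (by fun_prop (disch := norm_num)) ?_)
    simpa using one_sub_conj_mul_ne_zero (hz j) (hz i).le
  refine PosSemidef.of_tendsto (l := 𝓝[<] 1) (hP1 ▸ hPc.tendsto.mono_left nhdsWithin_le_nhds) ?_
  filter_upwards [Ioo_mem_nhdsLT zero_lt_one, eventually_all.2 fun i => Ioo_mem_nhdsLT (hz i)]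
    with s hs hzs
  have hmaps : ∀ w : ℂ, ‖w‖ ≤ 1 → (s : ℂ) * w ∈ ball 0 1 := fun w hw => by
    rw [mem_ball_zero_iff, norm_mul, norm_real, Real.norm_of_nonneg hs.1.le]
    nlinarith [hs.2, hs.1, norm_nonneg w]
  refine posSemidef_pickMatrix_of_diffContOnCl ?_
    (fun w hw => hφb _ (hmaps w (mem_sphere_zero_iff_norm.1 hw).le)) fun i => ?_
  · refine DifferentiableOn.diffContOnCl ?_
    rw [closure_ball 0 one_ne_zero]
    exact hφd.comp (differentiableOn_id.const_mul _) fun w hw => hmaps w (by simpa using hw)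
  · rw [norm_div, norm_real, Real.norm_of_nonneg hs.1.le, div_lt_one hs.1]
    exact (hzs i).1

end

open Annulus in
open scoped ComplexOrder in
/-- If `φ` is holomorphic on `𝔻` with `|φ| ≤ 1`, then the kernel
`(1 - φ(λ) conj(φ(μ))) k_r(λ, μ)` is positive semidefinite on `A_r × A_r`. -/
theorem statement18 (r : ℝ) (hr0 : 0 < r) (hr1 : r < 1)
    (φ : ℂ → ℂ) (hφd : DifferentiableOn ℂ φ (Metric.ball (0 : ℂ) 1))
    (hφb : ∀ z ∈ Metric.ball (0 : ℂ) 1, ‖φ z‖ ≤ 1) :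
    ∀ (n : ℕ) (z : Fin n → ℂ), (∀ i, z i ∈ ARset r) →
      Matrix.PosSemidef (Matrix.of fun i j : Fin n =>
        (1 - φ (z i) * (starRingEnd ℂ) (φ (z j))) *
          (((1 - r ^ 2 : ℝ) : ℂ) /
            ((1 - z i * (starRingEnd ℂ) (z j)) *
              (1 - (r : ℂ) ^ 2 / (z i * (starRingEnd ℂ) (z j)))))) := by
  intro n z hz
  have hrz : ∀ i, ‖(r : ℂ) / z i‖ < 1 := fun i => by
    rw [norm_div, Complex.norm_real, Real.norm_of_nonneg hr0.le,
      div_lt_one (hr0.trans (hz i).1)]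
    exact (hz i).1
  have hr2 : (0 : ℝ) ≤ 1 - r ^ 2 := by nlinarith
  have hprod := (posSemidef_pickMatrix hφd hφb fun i => (hz i).2).hadamard
    ((posSemidef_szegoMatrix hrz).smul hr2)
  refine (congrArg Matrix.PosSemidef (Matrix.ext fun i j => ?_)).mp hprod
  simp only [pickMatrix, szegoMatrix, szegoKernel, Matrix.hadamard_apply, Matrix.smul_apply,
    Matrix.of_apply, Complex.real_smul, div_eq_mul_inv, mul_inv, map_mul, map_inv₀,
    Complex.conj_ofReal]
  push_cast
  ring
end
end
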